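/- arXiv:1411.0455 — 3 statements merged into one kernel-verified Lean document; each statement's English description precedes it below -/
import Mathlib

section
/- Let r ≥ 1 be an integer and a, b ≥ 0 real numbers. Define the genus γ = (r-1)a + b + 2 and dimension d = r + r(r-1)a/2 + rb, and set q = -((r-1)/2)·d·a² + ((r-1)/r)·a·d·(d+r) + 2d(d+r)/r. Then q/4 < γ²·d. -/
/-! With `x = (r-1)a` one has `d + r = r (x/2 + b + 2)`, so `q` factors as
`d ((x+2)(x/2+b+2) - (r-1)a²/2)`. Dropping the nonpositive `a²` term, the claim reduces,
after dividing by `d > 0`, to the elementary bound `(x+2)(x/2+b+2) < 4 (x+b+2)²`. -/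

lemma mul_half_add_lt_four_mul_sq {x b : ℝ} (hx : 0 ≤ x) (hb : 0 ≤ b) :
    (x + 2) * (x / 2 + b + 2) < 4 * (x + b + 2) ^ 2 := by
  nlinarith [mul_nonneg hx hb]

lemma englis_q_eq_mul {r a b d q : ℝ} (hr : r ≠ 0)
    (hd : d = r + r * (r - 1) * a / 2 + r * b)
    (hq : q = -((r - 1) / 2) * d * a ^ 2 + ((r - 1) / r) * a * d * (d + r) + 2 * d * (d + r) / r) :
    q = d * (((r - 1) * a + 2) * ((r - 1) * a / 2 + b + 2) - (r - 1) * a ^ 2 / 2) := by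
  have hdr : d + r = r * ((r - 1) * a / 2 + b + 2) := by rw [hd]; ring
  rw [hq, hdr]
  field_simp
  ring

/-- For an irreducible bounded symmetric domain of rank `r ≥ 1` with numerical
invariants `a, b ≥ 0`, genus `γ = (r-1)a + b + 2`, dimension
`d = r + r(r-1)a/2 + rb`, and Engliš's quantity `q`, one has `q/4 < γ² d`. -/
theorem stmt0 (r : ℕ) (hr : 1 ≤ r) (a b : ℝ) (ha : 0 ≤ a) (hb : 0 ≤ b)
    (γ d q : ℝ)
    (hγ : γ = ((r : ℝ) - 1) * a + b + 2)
    (hd : d = (r : ℝ) + (r : ℝ) * ((r : ℝ) - 1) * a / 2 + (r : ℝ) * b)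
    (hq : q = -(((r : ℝ) - 1) / 2) * d * a ^ 2
        + (((r : ℝ) - 1) / (r : ℝ)) * a * d * (d + (r : ℝ))
        + 2 * d * (d + (r : ℝ)) / (r : ℝ)) :
    q / 4 < γ ^ 2 * d := by
  have hr1 : (0 : ℝ) ≤ r - 1 := sub_nonneg.mpr (by exact_mod_cast hr)
  have hx : 0 ≤ ((r : ℝ) - 1) * a := mul_nonneg hr1 ha
  have hd_pos : 0 < d := by rw [hd]; positivity
  have ha2 : 0 ≤ ((r : ℝ) - 1) * a ^ 2 / 2 := by positivity
  rw [englis_q_eq_mul (by positivity) hd hq, hγ]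
  calc d * (((r - 1) * a + 2) * ((r - 1) * a / 2 + b + 2) - (r - 1) * a ^ 2 / 2) / 4
      ≤ d * (((r - 1) * a + 2) * ((r - 1) * a / 2 + b + 2)) / 4 := by gcongr; linarith
    _ < ((r - 1) * a + b + 2) ^ 2 * d := by
      linarith [mul_lt_mul_of_pos_left (mul_half_add_lt_four_mul_sq hx hb) hd_pos]
end

section
/- Let r ≥ 1 be an integer, a, b ≥ 0 real numbers, γ = (r-1)a + b + 2, d = r + r(r-1)a/2 + rb, q = -((r-1)/2)·d·a² + ((r-1)/r)·a·d·(d+r) + 2d(d+r)/r. Define a₁ = -(1/2)γd and a₂ = (1/8)γ²d² - (1/6)γ²d + (1/24)q. Then a₂ - (1/2)·a₁² < 0. -/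
/-! With `t = (r-1)a ≥ 0` and `s = 2 + t/2 + b`, one has `d = r s`, `γ = t + b + 2` and
`q = d ((t+2) s - t a / 2)`. Both `t + 2` and `s` are at most `γ`, so `q ≤ γ² d`. Since
`a₂ - a₁²/2 = q/24 - γ² d/6`, the difference is at most `-γ² d/8 < 0`. -/

section TYZ

variable {x a b γ d q : ℝ}

lemma tyz_dim_pos (hx : 1 ≤ x) (ha : 0 ≤ a) (hb : 0 ≤ b)
    (hd : d = x + x * (x - 1) * a / 2 + x * b) : 0 < d := by
  have ht : 0 ≤ (x - 1) * a := mul_nonneg (by linarith) ha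
  rw [hd]; nlinarith

lemma tyz_q_eq (hx : x ≠ 0) (hd : d = x + x * (x - 1) * a / 2 + x * b)
    (hq : q = -((x - 1) / 2) * d * a ^ 2 + ((x - 1) / x) * a * d * (d + x)
        + 2 * d * (d + x) / x) :
    q = d * (((x - 1) * a + 2) * (2 + (x - 1) * a / 2 + b) - (x - 1) * a * a / 2) := by
  have hdx : (d + x) / x = 2 + (x - 1) * a / 2 + b := by
    rw [div_eq_iff hx, hd]; ring
  rw [hq, ← hdx]
  field_simp
  ring

lemma tyz_q_le (hx : 1 ≤ x) (ha : 0 ≤ a) (hb : 0 ≤ b)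
    (hγ : γ = (x - 1) * a + b + 2) (hd : d = x + x * (x - 1) * a / 2 + x * b)
    (hq : q = -((x - 1) / 2) * d * a ^ 2 + ((x - 1) / x) * a * d * (d + x)
        + 2 * d * (d + x) / x) :
    q ≤ γ ^ 2 * d := by
  have ht : 0 ≤ (x - 1) * a := mul_nonneg (by linarith) ha
  have hd0 := tyz_dim_pos hx ha hb hd
  have hprod : ((x - 1) * a + 2) * (2 + (x - 1) * a / 2 + b) ≤ γ ^ 2 := by
    rw [sq]
    exact mul_le_mul (by linarith) (by linarith) (by linarith) (by linarith)
  rw [tyz_q_eq (by positivity) hd hq, mul_comm (γ ^ 2)]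
  gcongr
  nlinarith [mul_nonneg ht ha]

end TYZ

/-- For the first two TYZ coefficients `a₁ = -γd/2` and
`a₂ = γ²d²/8 - γ²d/6 + q/24` of an irreducible bounded symmetric domain
`(Ω, (1/γ) g_B)`, one has `a₂ - a₁²/2 < 0`. -/
theorem stmt2 (r : ℕ) (hr : 1 ≤ r) (a b : ℝ) (ha : 0 ≤ a) (hb : 0 ≤ b)
    (γ d q a₁ a₂ : ℝ)
    (hγ : γ = ((r : ℝ) - 1) * a + b + 2)
    (hd : d = (r : ℝ) + (r : ℝ) * ((r : ℝ) - 1) * a / 2 + (r : ℝ) * b)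
    (hq : q = -(((r : ℝ) - 1) / 2) * d * a ^ 2
        + (((r : ℝ) - 1) / (r : ℝ)) * a * d * (d + (r : ℝ))
        + 2 * d * (d + (r : ℝ)) / (r : ℝ))
    (ha₁ : a₁ = -(1 / 2) * γ * d)
    (ha₂ : a₂ = (1 / 8) * γ ^ 2 * d ^ 2 - (1 / 6) * γ ^ 2 * d + (1 / 24) * q) :
    a₂ - (1 / 2) * a₁ ^ 2 < 0 := by
  have hx : (1 : ℝ) ≤ r := by exact_mod_cast hr
  have hd0 : 0 < d := tyz_dim_pos hx ha hb hd
  have hγ0 : 0 < γ := by rw [hγ]; nlinarith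
  have hqle : q ≤ γ ^ 2 * d := tyz_q_le hx ha hb hγ hd hq
  have hγd : 0 < γ ^ 2 * d := by positivity
  calc a₂ - (1 / 2) * a₁ ^ 2 = q / 24 - γ ^ 2 * d / 6 := by rw [ha₂, ha₁]; ring
    _ < 0 := by linarith
end

section
/- The Kähler metric on ℂ² \ {0} with potential Φ(z) = |z|² + log|z|² (|z|² = |z₁|² + |z₂|²) has zero scalar curvature. -/
noncomputable section

/-- Wirtinger derivative `∂f/∂zᵢ` of a function `f : ℂ² → ℂ`. -/
def dz (i : Fin 2) (f : (Fin 2 → ℂ) → ℂ) (z : Fin 2 → ℂ) : ℂ :=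
  (1 / 2) * (fderiv ℝ f z (Pi.single i 1)
    - Complex.I * fderiv ℝ f z (Pi.single i Complex.I))

/-- Wirtinger derivative `∂f/∂z̄ᵢ` of a function `f : ℂ² → ℂ`. -/
def dzbar (i : Fin 2) (f : (Fin 2 → ℂ) → ℂ) (z : Fin 2 → ℂ) : ℂ :=
  (1 / 2) * (fderiv ℝ f z (Pi.single i 1)
    + Complex.I * fderiv ℝ f z (Pi.single i Complex.I))

/-- Simanca's Kähler potential `Φ(z) = |z|² + log |z|²` on `ℂ² \ {0}`. -/
def simancaPotential (z : Fin 2 → ℂ) : ℂ :=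
  ((‖z 0‖ ^ 2 + ‖z 1‖ ^ 2 : ℝ) : ℂ)
    + Complex.log ((‖z 0‖ ^ 2 + ‖z 1‖ ^ 2 : ℝ) : ℂ)

/-- The Kähler metric `g_{i j̄} = ∂²Φ/∂zᵢ∂z̄ⱼ`. -/
def simancaMetric (z : Fin 2 → ℂ) : Matrix (Fin 2) (Fin 2) ℂ :=
  fun i j => dz i (dzbar j simancaPotential) z

/-- The scalar curvature `ρ = -Σ g^{j̄ i} ∂²(log det g)/∂zᵢ∂z̄ⱼ`. -/
def simancaScalar (z : Fin 2 → ℂ) : ℂ :=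
  -∑ i : Fin 2, ∑ j : Fin 2,
    (simancaMetric z)⁻¹ j i
      * dz i (dzbar j (fun w => Complex.log (simancaMetric w).det)) z

/-!
Write `s = |z|²`. The complex Hessian `∂ᵢ∂̄ⱼ` of a radial function `φ(s)` is
`φ'(s) I + φ''(s) z̄ zᵀ`. For `Φ = s + log s` this gives `g = (1 + 1/s) I - z̄ zᵀ / s²`, whose
determinant is `1 + 1/s`; so `log det g = log (1 + 1/s)` is radial too, and its Hessian has the
same shape with coefficients `c = 1/(s+1) - 1/s` and `d = 1/s² - 1/(s+1)²`. For such matrices on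
`ℂ²`, `tr ((a I + b z̄ zᵀ)⁻¹ (c I + d z̄ zᵀ)) = (2ac + (ad + bc) s) / (a (a + b s))`, and the
numerator vanishes for the values above.
-/

open Filter Topology Matrix ComplexConjugate

section Wirtinger

variable {ι : Type*} [Fintype ι]

def wirtingerForm (a b : ι → ℂ) : (ι → ℂ) →L[ℝ] ℂ :=
  ∑ i, (a i • ContinuousLinearMap.proj i
    + b i • Complex.conjCLE.toContinuousLinearMap.comp (ContinuousLinearMap.proj i))

theorem wirtingerForm_apply (a b v : ι → ℂ) :
    wirtingerForm a b v = ∑ i, (a i * v i + b i * conj (v i)) := by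
  simp [wirtingerForm]

theorem wirtingerForm_single [DecidableEq ι] (a b : ι → ℂ) (i : ι) (c : ℂ) :
    wirtingerForm a b (Pi.single i c) = a i * c + b i * conj c := by
  simp [wirtingerForm_apply, Pi.single_apply, apply_ite conj, Finset.sum_add_distrib]

def HasWirtingerDerivAt (f : (ι → ℂ) → ℂ) (a b z : ι → ℂ) : Prop :=
  HasFDerivAt f (wirtingerForm a b) z

variable {f g : (ι → ℂ) → ℂ} {a b a' b' z : ι → ℂ}

theorem HasWirtingerDerivAt.of_hasFDerivAt {L : (ι → ℂ) →L[ℝ] ℂ} (h : HasFDerivAt f L z)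
    (hL : ∀ v, L v = wirtingerForm a b v) : HasWirtingerDerivAt f a b z := by
  rwa [HasWirtingerDerivAt, ← ContinuousLinearMap.ext hL]

theorem hasWirtingerDerivAt_apply [DecidableEq ι] (j : ι) (z : ι → ℂ) :
    HasWirtingerDerivAt (fun w => w j) (Pi.single j 1) 0 z :=
  .of_hasFDerivAt (hasFDerivAt_apply j z) fun v => by
    simp [wirtingerForm_apply, Pi.single_apply]

theorem hasWirtingerDerivAt_conj_apply [DecidableEq ι] (j : ι) (z : ι → ℂ) :
    HasWirtingerDerivAt (fun w => conj (w j)) 0 (Pi.single j 1) z :=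
  .of_hasFDerivAt (Complex.conjCLE.hasFDerivAt.comp z (hasFDerivAt_apply j z)) fun v => by
    simp [wirtingerForm_apply, Pi.single_apply]

theorem HasWirtingerDerivAt.mul (hf : HasWirtingerDerivAt f a b z)
    (hg : HasWirtingerDerivAt g a' b' z) :
    HasWirtingerDerivAt (fun w => f w * g w) (f z • a' + g z • a) (f z • b' + g z • b) z :=
  .of_hasFDerivAt (HasFDerivAt.mul hf hg) fun v => by
    simp [wirtingerForm_apply, Finset.mul_sum, ← Finset.sum_add_distrib]
    exact Finset.sum_congr rfl fun _ _ => by ring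

theorem HasWirtingerDerivAt.sum {κ : Type*} {s : Finset κ} {F : κ → (ι → ℂ) → ℂ}
    {A B : κ → ι → ℂ} (h : ∀ k ∈ s, HasWirtingerDerivAt (F k) (A k) (B k) z) :
    HasWirtingerDerivAt (fun w => ∑ k ∈ s, F k w) (∑ k ∈ s, A k) (∑ k ∈ s, B k) z :=
  .of_hasFDerivAt (HasFDerivAt.fun_sum h) fun v => by
    simp only [_root_.sum_apply, wirtingerForm_apply, Finset.sum_apply,
      Finset.sum_mul, ← Finset.sum_add_distrib]
    exact Finset.sum_comm

theorem HasDerivAt.comp_hasWirtingerDerivAt {φ : ℂ → ℂ} {φ' : ℂ}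
    (hφ : HasDerivAt φ φ' (f z)) (hf : HasWirtingerDerivAt f a b z) :
    HasWirtingerDerivAt (fun w => φ (f w)) (φ' • a) (φ' • b) z :=
  .of_hasFDerivAt ((hφ.hasFDerivAt.restrictScalars ℝ).comp z hf) fun v => by
    simp [wirtingerForm_apply]
    exact Finset.sum_congr rfl fun _ _ => by ring

theorem hasWirtingerDerivAt_star_dotProduct_self [DecidableEq ι] (z : ι → ℂ) :
    HasWirtingerDerivAt (fun w => star w ⬝ᵥ w) (star z) z z := by
  have h := HasWirtingerDerivAt.sum (s := Finset.univ) fun j _ =>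
    (hasWirtingerDerivAt_conj_apply j z).mul (hasWirtingerDerivAt_apply j z)
  convert h using 1
  · rfl
  · ext i; simp [Finset.sum_apply, Pi.single_apply]
  · ext i; simp [Finset.sum_apply, Pi.single_apply]

theorem HasDerivAt.comp_star_dotProduct_self [DecidableEq ι] {φ : ℂ → ℂ} {φ' : ℂ}
    (hφ : HasDerivAt φ φ' (star z ⬝ᵥ z)) :
    HasWirtingerDerivAt (fun w => φ (star w ⬝ᵥ w)) (φ' • star z) (φ' • z) z :=
  hφ.comp_hasWirtingerDerivAt (f := fun w => star w ⬝ᵥ w)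
    (hasWirtingerDerivAt_star_dotProduct_self z)

end Wirtinger

section

variable {f g : (Fin 2 → ℂ) → ℂ} {a b z : Fin 2 → ℂ}

theorem HasWirtingerDerivAt.dz_eq (h : HasWirtingerDerivAt f a b z) (i : Fin 2) :
    dz i f z = a i := by
  rw [dz, h.fderiv, wirtingerForm_single, wirtingerForm_single, Complex.conj_I, map_one]
  linear_combination (b i - a i) / 2 * Complex.I_sq

theorem HasWirtingerDerivAt.dzbar_eq (h : HasWirtingerDerivAt f a b z) (i : Fin 2) :
    dzbar i f z = b i := by
  rw [dzbar, h.fderiv, wirtingerForm_single, wirtingerForm_single, Complex.conj_I, map_one]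
  linear_combination (a i - b i) / 2 * Complex.I_sq

theorem Filter.EventuallyEq.dz_eq (h : f =ᶠ[𝓝 z] g) (i : Fin 2) : dz i f z = dz i g z := by
  rw [dz, dz, h.fderiv_eq]

theorem Filter.EventuallyEq.dzbar_eq (h : f =ᶠ[𝓝 z] g) (i : Fin 2) :
    dzbar i f z = dzbar i g z := by
  rw [dzbar, dzbar, h.fderiv_eq]

end

def radialHessian {ι : Type*} [Fintype ι] [DecidableEq ι] (a b : ℂ) (z : ι → ℂ) :
    Matrix ι ι ℂ :=
  a • 1 + b • vecMulVec (star z) z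

section Radial

variable {z : Fin 2 → ℂ}

theorem dz_dzbar_eq_radialHessian {F : (Fin 2 → ℂ) → ℂ} {φ φ' : ℂ → ℂ} {φ'' : ℂ}
    (hF : F =ᶠ[𝓝 z] fun w => φ (star w ⬝ᵥ w))
    (hφ : ∀ᶠ s in 𝓝 (star z ⬝ᵥ z), HasDerivAt φ (φ' s) s)
    (hφ' : HasDerivAt φ' φ'' (star z ⬝ᵥ z)) (i j : Fin 2) :
    dz i (dzbar j F) z = radialHessian (φ' (star z ⬝ᵥ z)) φ'' z i j := by
  have hφ_near : ∀ᶠ w in 𝓝 z, HasDerivAt φ (φ' (star w ⬝ᵥ w)) (star w ⬝ᵥ w) :=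
    (hasWirtingerDerivAt_star_dotProduct_self z).continuousAt.eventually hφ
  have hdzbar : dzbar j F =ᶠ[𝓝 z] fun w => φ' (star w ⬝ᵥ w) * w j := by
    filter_upwards [hF.eventuallyEq_nhds, hφ_near] with w hFw hφw
    rw [hFw.dzbar_eq, hφw.comp_star_dotProduct_self.dzbar_eq]
    rfl
  rw [hdzbar.dz_eq, (hφ'.comp_star_dotProduct_self.mul (hasWirtingerDerivAt_apply j z)).dz_eq]
  simp [radialHessian, Pi.single_apply, Matrix.one_apply, vecMulVec_apply]
  ring

theorem det_radialHessian (a b : ℂ) (z : Fin 2 → ℂ) :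
    (radialHessian a b z).det = a * (a + b * (star z ⬝ᵥ z)) := by
  simp [radialHessian, det_fin_two, dotProduct, Fin.sum_univ_two, vecMulVec_apply]
  ring

-- No invertibility hypothesis: if `a (a + b s) = 0`, both sides are junk zeros.
theorem sum_inv_radialHessian_mul (a b c d : ℂ) (z : Fin 2 → ℂ) :
    ∑ i, ∑ j, (radialHessian a b z)⁻¹ j i * radialHessian c d z i j
      = (2 * a * c + (a * d + b * c) * (star z ⬝ᵥ z)) / (a * (a + b * (star z ⬝ᵥ z))) := by
  rw [inv_def, adjugate_fin_two, det_radialHessian, Ring.inverse_eq_inv', div_eq_mul_inv, mul_inv]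
  simp [radialHessian, dotProduct, Fin.sum_univ_two, vecMulVec_apply]
  ring

end Radial

open scoped ComplexOrder

section Simanca

variable {z : Fin 2 → ℂ}

theorem star_dotProduct_self_eq_ofReal (w : Fin 2 → ℂ) :
    star w ⬝ᵥ w = ((‖w 0‖ ^ 2 + ‖w 1‖ ^ 2 : ℝ) : ℂ) := by
  simp [dotProduct, Fin.sum_univ_two, Complex.conj_mul']

theorem simancaPotential_eq :
    simancaPotential = fun w => star w ⬝ᵥ w + Complex.log (star w ⬝ᵥ w) := by
  simp only [star_dotProduct_self_eq_ofReal]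
  rfl

theorem eventually_nhds_re_pos {s : ℂ} (hs : 0 < s) : ∀ᶠ t in 𝓝 s, 0 < t.re :=
  (isOpen_lt continuous_const Complex.continuous_re).mem_nhds (Complex.pos_iff.mp hs).1

theorem hasDerivAt_add_log {s : ℂ} (hs : 0 < s.re) :
    HasDerivAt (fun s => s + Complex.log s) (1 + s⁻¹) s :=
  (hasDerivAt_id s).add (Complex.hasDerivAt_log (Or.inl hs))

theorem simancaMetric_eq (hz : z ≠ 0) :
    simancaMetric z = radialHessian (1 + (star z ⬝ᵥ z)⁻¹) (-((star z ⬝ᵥ z) ^ 2)⁻¹) z := by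
  have hpos : 0 < star z ⬝ᵥ z := dotProduct_star_self_pos_iff.mpr hz
  have hφ : ∀ᶠ s in 𝓝 (star z ⬝ᵥ z), HasDerivAt (fun s => s + Complex.log s) (1 + s⁻¹) s :=
    (eventually_nhds_re_pos hpos).mono fun _ => hasDerivAt_add_log
  ext i j
  exact dz_dzbar_eq_radialHessian (by rw [simancaPotential_eq]) hφ
    ((hasDerivAt_inv hpos.ne').const_add 1) i j

theorem det_simancaMetric (hz : z ≠ 0) : (simancaMetric z).det = 1 + (star z ⬝ᵥ z)⁻¹ := by
  have hs0 : star z ⬝ᵥ z ≠ 0 := dotProduct_star_self_eq_zero.not.mpr hz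
  rw [simancaMetric_eq hz, det_radialHessian]
  field_simp
  ring

theorem hasDerivAt_log_one_add_inv {s : ℂ} (hs : 0 < s.re) :
    HasDerivAt (fun s => Complex.log (1 + s⁻¹)) ((s + 1)⁻¹ - s⁻¹) s := by
  have hs0 : s ≠ 0 := Complex.ne_zero_of_re_pos hs
  have hs1 : s + 1 ≠ 0 := Complex.ne_zero_of_re_pos (by simpa using hs.trans (lt_add_one s.re))
  have hslit : 1 + s⁻¹ ∈ Complex.slitPlane := Or.inl <| by
    simpa [Complex.inv_re] using add_pos one_pos (div_pos hs (Complex.normSq_pos.mpr hs0))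
  refine (((hasDerivAt_inv hs0).const_add 1).clog hslit).congr_deriv ?_
  field_simp
  ring

theorem dz_dzbar_log_det_simancaMetric (hz : z ≠ 0) (i j : Fin 2) :
    dz i (dzbar j (fun w => Complex.log (simancaMetric w).det)) z
      = radialHessian ((star z ⬝ᵥ z + 1)⁻¹ - (star z ⬝ᵥ z)⁻¹)
          (((star z ⬝ᵥ z) ^ 2)⁻¹ - ((star z ⬝ᵥ z + 1) ^ 2)⁻¹) z i j := by
  have hpos : 0 < star z ⬝ᵥ z := dotProduct_star_self_pos_iff.mpr hz
  have hF : (fun w => Complex.log (simancaMetric w).det)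
      =ᶠ[𝓝 z] fun w => Complex.log (1 + (star w ⬝ᵥ w)⁻¹) := by
    filter_upwards [isOpen_ne.mem_nhds hz] with w hw
    rw [det_simancaMetric hw]
  have hψ : ∀ᶠ s in 𝓝 (star z ⬝ᵥ z),
      HasDerivAt (fun s => Complex.log (1 + s⁻¹)) ((s + 1)⁻¹ - s⁻¹) s :=
    (eventually_nhds_re_pos hpos).mono fun _ => hasDerivAt_log_one_add_inv
  have hψ' : HasDerivAt (fun s => (s + 1)⁻¹ - s⁻¹)
      (((star z ⬝ᵥ z) ^ 2)⁻¹ - ((star z ⬝ᵥ z + 1) ^ 2)⁻¹) (star z ⬝ᵥ z) := by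
    have h := (((hasDerivAt_id' (star z ⬝ᵥ z)).add_const 1).inv (add_pos hpos one_pos).ne').sub
      (hasDerivAt_inv hpos.ne')
    exact h.congr_deriv (by ring)
  exact dz_dzbar_eq_radialHessian hF hψ hψ' i j

end Simanca

/-- Simanca's metric on `ℂ² \ {0}` with potential `Φ = |z|² + log |z|²` has
zero scalar curvature. -/
theorem stmt8 (z : Fin 2 → ℂ) (hz : z ≠ 0) : simancaScalar z = 0 := by
  have hpos : 0 < star z ⬝ᵥ z := dotProduct_star_self_pos_iff.mpr hz
  simp only [simancaScalar, simancaMetric_eq hz, dz_dzbar_log_det_simancaMetric hz,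
    sum_inv_radialHessian_mul]
  have hs1 : star z ⬝ᵥ z + 1 ≠ 0 := (add_pos hpos one_pos).ne'
  rw [neg_eq_zero, div_eq_zero_iff]
  left
  field_simp
  ring
end
end
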